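/- arXiv:1406.5324 — 2 statements merged into one kernel-verified Lean document; each statement's English description precedes it below -/
import Mathlib

section
/- Let f: [0,2π) → [0,2π) be increasing with f' Lipschitz and f' > 0. Define G(re^{iθ}) = r^{f'(θ)} e^{if(θ)}. Then the Beltrami coefficient of G satisfies |μ_G(re^{iθ})| = |f''(θ) log r| / |2f'(θ) - i f''(θ) log r| = 1/√(1 + (2f'(θ)/(f''(θ) log r))²) wherever f''(θ) ≠ 0. -/
open Real Set

/-- For the extension G(re^{iθ}) = r^{f'(θ)} e^{if(θ)} of a circle homeomorphism
with f increasing, f' > 0 and f' Lipschitz, the Beltrami coefficient μ_G = G_{z̄}/G_z,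
computed from the polar Wirtinger derivatives, satisfies (wherever f''(θ) ≠ 0)
|μ_G(re^{iθ})| = |f''(θ) log r| / |2f'(θ) - i f''(θ) log r|
              = 1/√(1 + (2f'(θ)/(f''(θ) log r))²). -/
theorem stmt_1 (f : ℝ → ℝ) (C : NNReal)
    (hmono : StrictMonoOn f (Ico 0 (2 * π)))
    (hdiff : ∀ θ ∈ Ico 0 (2 * π), DifferentiableAt ℝ f θ)
    (hpos : ∀ θ ∈ Ico 0 (2 * π), 0 < deriv f θ)
    (hlip : LipschitzWith C (deriv f))
    (G : ℝ → ℝ → ℂ)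
    (hG : ∀ r θ : ℝ, G r θ =
      ((r ^ deriv f θ : ℝ) : ℂ) * Complex.exp (Complex.I * (f θ : ℂ)))
    (r θ : ℝ) (hr0 : 0 < r) (hr1 : r < 1) (hθ : θ ∈ Ico 0 (2 * π))
    (hf'' : DifferentiableAt ℝ (deriv f) θ) (hne : deriv (deriv f) θ ≠ 0)
    (Gzbar Gz μ : ℂ)
    (hGzbar : Gzbar = (Complex.exp (-Complex.I * (θ : ℂ)) / 2) *
        (deriv (fun s : ℝ => G s θ) r + (Complex.I / (r : ℂ)) * deriv (fun t : ℝ => G r t) θ))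
    (hGz : Gz = (Complex.exp (-Complex.I * (θ : ℂ)) / 2) *
        (deriv (fun s : ℝ => G s θ) r - (Complex.I / (r : ℂ)) * deriv (fun t : ℝ => G r t) θ))
    (hμ : μ = Gzbar / Gz) :
    ‖μ‖ = |deriv (deriv f) θ * Real.log r| /
        ‖(2 * Complex.ofReal (deriv f θ) -
          Complex.I * Complex.ofReal (deriv (deriv f) θ) * Complex.ofReal (Real.log r))‖ ∧
    ‖μ‖ =
      1 / Real.sqrt (1 + (2 * deriv f θ / (deriv (deriv f) θ * Real.log r)) ^ 2) := by
  set a := deriv f θ with ha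
  set b := deriv (deriv f) θ with hb
  set L := Real.log r with hL
  have ha0 : 0 < a := hpos θ hθ
  have hL0 : L < 0 := Real.log_neg hr0 hr1
  -- radial derivative
  have hd1 : deriv (fun s : ℝ => G s θ) r
      = ((a * r ^ (a - 1) : ℝ) : ℂ) * Complex.exp (Complex.I * (f θ : ℂ)) := by
    have h : HasDerivAt (fun s : ℝ => G s θ)
        (((a * r ^ (a - 1) : ℝ) : ℂ) * Complex.exp (Complex.I * (f θ : ℂ))) r := by
      have h0 : HasDerivAt (fun s : ℝ => s ^ a) (a * r ^ (a - 1)) r :=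
        Real.hasDerivAt_rpow_const (Or.inl hr0.ne')
      have := (h0.ofReal_comp).mul_const (Complex.exp (Complex.I * (f θ : ℂ)))
      refine this.congr_deriv rfl |>.congr_of_eventuallyEq ?_
      filter_upwards with s using hG s θ
    exact h.deriv
  -- angular derivative
  have hfd : HasDerivAt f a θ := (hdiff θ hθ).hasDerivAt
  have hfd2 : HasDerivAt (deriv f) b θ := hf''.hasDerivAt
  have hd2 : deriv (fun t : ℝ => G r t)
      θ = (((r ^ a : ℝ) : ℂ)) * ((L * b : ℝ) + Complex.I * (a : ℝ)) *
        Complex.exp (Complex.I * (f θ : ℂ)) := by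
    have h1 : HasDerivAt (fun t : ℝ => ((r ^ deriv f t : ℝ) : ℂ))
        ((r ^ a * L * b : ℝ) : ℂ) θ := by
      have : HasDerivAt (fun t : ℝ => (r : ℝ) ^ deriv f t) (r ^ a * L * b) θ := by
        have := (hasStrictDerivAt_const_rpow hr0 a).hasDerivAt.comp θ hfd2
        simpa [mul_comm, mul_assoc, mul_left_comm, hL, Function.comp_def] using this
      exact this.ofReal_comp
    have h2 : HasDerivAt (fun t : ℝ => Complex.exp (Complex.I * (f t : ℂ)))
        (Complex.I * (a : ℝ) * Complex.exp (Complex.I * (f θ : ℂ))) θ := by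
      have := ((hfd.ofReal_comp).const_mul Complex.I).cexp
      simpa [mul_comm, mul_assoc, mul_left_comm] using this
    have h := h1.mul h2
    have h' : HasDerivAt (fun t : ℝ => G r t)
        (((r ^ a * L * b : ℝ) : ℂ) * Complex.exp (Complex.I * (f θ : ℂ))
          + ((r ^ deriv f θ : ℝ) : ℂ) * (Complex.I * (a : ℝ) * Complex.exp (Complex.I * (f θ : ℂ)))) θ := by
      refine h.congr_of_eventuallyEq ?_
      filter_upwards with t using hG r t
    rw [h'.deriv]
    push_cast
    ring
  -- simplify Gzbar and Gz
  set X := Complex.exp (Complex.I * (f θ : ℂ)) with hX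
  set E := Complex.exp (-Complex.I * (θ : ℂ)) / 2 with hE
  have hra : ((r ^ a : ℝ) : ℂ) / (r : ℂ) = ((r ^ (a - 1) : ℝ) : ℂ) := by
    rw [Real.rpow_sub hr0, Real.rpow_one]
    push_cast
    ring
  have hKne : E * ((r ^ (a - 1) : ℝ) : ℂ) * X ≠ 0 := by
    apply mul_ne_zero (mul_ne_zero _ _) (Complex.exp_ne_zero _)
    · rw [hE]; exact div_ne_zero (Complex.exp_ne_zero _) two_ne_zero
    · exact_mod_cast (Real.rpow_pos_of_pos hr0 _).ne'
  have hrne : (r : ℂ) ≠ 0 := by exact_mod_cast hr0.ne'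
  have hZbar : Gzbar = E * ((r ^ (a - 1) : ℝ) : ℂ) * X * (Complex.I * (b : ℝ) * (L : ℝ)) := by
    rw [hGzbar, hd1, hd2]
    field_simp
    rw [show ((r ^ a : ℝ) : ℂ) = ((r ^ (a - 1) : ℝ) : ℂ) * (r : ℂ) by
      rw [← hra]; field_simp]
    ring_nf
    simp only [Complex.I_sq]
    push_cast
    ring
  have hZ : Gz = E * ((r ^ (a - 1) : ℝ) : ℂ) * X * (2 * (a : ℝ) - Complex.I * (b : ℝ) * (L : ℝ)) := by
    rw [hGz, hd1, hd2]
    field_simp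
    rw [show ((r ^ a : ℝ) : ℂ) = ((r ^ (a - 1) : ℝ) : ℂ) * (r : ℂ) by
      rw [← hra]; field_simp]
    ring_nf
    simp [Complex.I_sq]
    ring
  have hμ' : μ = (Complex.I * (b : ℝ) * (L : ℝ)) / (2 * (a : ℝ) - Complex.I * (b : ℝ) * (L : ℝ)) := by
    rw [hμ, hZbar, hZ, mul_div_mul_left _ _ hKne]
  have hden : ‖(2 * (a : ℝ) - Complex.I * (b : ℝ) * (L : ℝ))‖
      = Real.sqrt (4 * a ^ 2 + (b * L) ^ 2) := by
    rw [Complex.norm_def]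
    congr 1
    simp [Complex.normSq_apply]
    ring
  have hnum : ‖(Complex.I * (b : ℝ) * (L : ℝ))‖ = |b * L| := by
    simp [map_mul, abs_mul]
  have habs : ‖μ‖ = |b * L| / Real.sqrt (4 * a ^ 2 + (b * L) ^ 2) := by
    rw [hμ', norm_div, hnum, hden]
  have hbL : b * L ≠ 0 := mul_ne_zero hne hL0.ne
  constructor
  · rw [habs, hden]
  · rw [habs]
    have h1 : 1 + (2 * a / (b * L)) ^ 2 = (4 * a ^ 2 + (b * L) ^ 2) / (b * L) ^ 2 := by
      field_simp [hL0.ne]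
      ring
    rw [h1, Real.sqrt_div' _ ?hn]
    case hn => positivity
    rw [Real.sqrt_sq_eq_abs]
    rw [one_div, inv_div]
end

section
/- Let h: [0,π] → [0,1] be defined by h(θ) = 0 for θ < π/2 - ε, h(θ) = (θ - π/2 + ε)/(2ε) for π/2 - ε ≤ θ ≤ π/2 + ε, and h(θ) = 1 for θ > π/2 + ε. Define F(z) = z|z|^{1-h(arg z)} on the upper half-plane. Then F restricted to ℝ equals f₀ (f₀(x) = x for x ≤ 0, x² for x ≥ 0), and the pointwise distortion K(z,F) equals 1 for arg(z) > π/2 + ε and equals 2 for arg(z) < π/2 - ε. -/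
open Real

noncomputable section

/-- Pointwise distortion K(z,F) = ‖DF(z)‖² / J(z,F). -/
def Kdist (F : ℂ → ℂ) (z : ℂ) : ℝ :=
  ‖fderiv ℝ F z‖ ^ 2 / LinearMap.det ((fderiv ℝ F z).toLinearMap)

lemma hasFDerivAt_cabs (z : ℂ) (hz : z ≠ 0) :
    HasFDerivAt (fun w : ℂ => ‖w‖)
      ((1 / (2 * ‖z‖)) •
        ((2*z.re) • Complex.reCLM + (2*z.im) • Complex.imCLM)) z := by
  have h1 : HasFDerivAt (fun w : ℂ => w.re) Complex.reCLM z := Complex.reCLM.hasFDerivAt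
  have h2 : HasFDerivAt (fun w : ℂ => w.im) Complex.imCLM z := Complex.imCLM.hasFDerivAt
  have hq : HasFDerivAt (fun w : ℂ => w.re*w.re + w.im*w.im)
      ((2*z.re) • Complex.reCLM + (2*z.im) • Complex.imCLM) z := by
    have := (h1.mul h1).add (h2.mul h2)
    refine this.congr_fderiv ?_
    ext w
    simp
    ring
  have hne : z.re*z.re + z.im*z.im ≠ 0 := by
    have := Complex.normSq_pos.mpr hz
    rw [Complex.normSq_apply] at this
    linarith
  have habs : ∀ w : ℂ, ‖w‖ = Real.sqrt (w.re*w.re + w.im*w.im) := by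
    intro w; rw [Complex.norm_def, Complex.normSq_apply]
  have := hq.sqrt hne
  simp only [← habs] at this
  exact this

lemma Kdist_G (z : ℂ) (hz : z ≠ 0) :
    Kdist (fun w : ℂ => ‖w‖ • w) z = 2 := by
  set r : ℝ := ‖z‖ with hr
  set x : ℝ := z.re with hx
  set y : ℝ := z.im with hy
  have hrpos : 0 < r := by
    simpa [hr] using (norm_pos_iff.mpr hz)
  have hr2 : r ^ 2 = x ^ 2 + y ^ 2 := by
    rw [hr, Complex.sq_norm, Complex.normSq_apply]; ring
  set n' : ℂ →L[ℝ] ℝ :=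
    (1 / (2 * r)) • ((2*x) • Complex.reCLM + (2*y) • Complex.imCLM) with hn'
  set L : ℂ →L[ℝ] ℂ := r • ContinuousLinearMap.id ℝ ℂ + n'.smulRight z with hLdef
  have hL : HasFDerivAt (fun w : ℂ => ‖w‖ • w) L z :=
    (hasFDerivAt_cabs z hz).smul (hasFDerivAt_id z)
  have hn'app : ∀ w : ℂ, n' w = (x * w.re + y * w.im) / r := by
    intro w
    simp [hn', ContinuousLinearMap.smul_apply, ContinuousLinearMap.add_apply]
    field_simp
  have hLapp : ∀ w : ℂ, L w = r • w + ((x * w.re + y * w.im) / r) • z := by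
    intro w
    simp [hLdef, hn'app w]
  clear_value n' L
  have hz2 : z = Complex.mk x y := by rw [hx, hy]
  clear_value x y
  -- L z = (2r) • z
  have hLz : L z = (2*r) • z := by
    rw [hLapp]
    have : (x * z.re + y * z.im) / r = r := by
      have : x * z.re + y * z.im = r ^ 2 := by rw [← hx, ← hy, hr2]; ring
      rw [this]; field_simp
    rw [this]
    module
  -- norm of L
  have hnorm : ‖L‖ = 2 * r := by
    apply le_antisymm
    · apply ContinuousLinearMap.opNorm_le_bound _ (by positivity)
      intro w
      have hw2 : ‖w‖ ^ 2 = w.re ^ 2 + w.im ^ 2 := by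
        rw [Complex.sq_norm, Complex.normSq_apply]; ring
      have hCS : |x * w.re + y * w.im| ≤ r * ‖w‖ := by
        have h1 : (x * w.re + y * w.im) ^ 2 ≤ (r * ‖w‖) ^ 2 := by
          rw [mul_pow, hr2, hw2]
          nlinarith [sq_nonneg (x * w.im - y * w.re)]
        have := Real.sqrt_le_sqrt h1
        rwa [Real.sqrt_sq_eq_abs, Real.sqrt_sq (by positivity)] at this
      have e1 : ‖r • w‖ = r * ‖w‖ := by
        rw [norm_smul, Real.norm_eq_abs, abs_of_pos hrpos]
      have e2 : ‖((x * w.re + y * w.im) / r) • z‖ = |x * w.re + y * w.im| := by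
        rw [norm_smul, Real.norm_eq_abs, abs_div, abs_of_pos hrpos]
        have : ‖z‖ = r := by rw [← hr]
        rw [this]; field_simp
      calc ‖L w‖ ≤ ‖r • w‖ + ‖((x * w.re + y * w.im) / r) • z‖ := by
            rw [hLapp]; exact norm_add_le _ _
        _ ≤ r * ‖w‖ + r * ‖w‖ := by rw [e1, e2]; linarith
        _ = 2 * r * ‖w‖ := by ring
    · have h1 : ‖L z‖ = 2 * r * r := by
        rw [hLz, norm_smul, Real.norm_eq_abs, abs_of_pos (by linarith), ← hr]
      have h2 := L.le_opNorm z
      rw [h1, ← hr] at h2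
      nlinarith
  -- determinant of L
  have hdet : LinearMap.det (L.toLinearMap) = 2 * r ^ 2 := by
    have hmat : LinearMap.toMatrix Complex.basisOneI Complex.basisOneI L.toLinearMap =
        !![r + x*x/r, x*y/r; x*y/r, r + y*y/r] := by
      ext i j
      fin_cases i <;> fin_cases j <;>
        simp [LinearMap.toMatrix_apply, Complex.coe_basisOneI_repr, Complex.coe_basisOneI,
          hLapp, Complex.add_re, Complex.add_im, Complex.smul_re, Complex.smul_im,
          ← hx, ← hy] <;> ring
    rw [← LinearMap.det_toMatrix Complex.basisOneI, hmat, Matrix.det_fin_two_of]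
    have hrne : r ≠ 0 := ne_of_gt hrpos
    field_simp
    linear_combination (-(r ^ 2)) * hr2
  have hfd : fderiv ℝ (fun w : ℂ => ‖w‖ • w) z = L := hL.fderiv
  show ‖fderiv ℝ (fun w : ℂ => ‖w‖ • w) z‖ ^ 2 /
    LinearMap.det ((fderiv ℝ (fun w : ℂ => ‖w‖ • w) z).toLinearMap) = 2
  rw [hfd, hnorm, hdet, mul_pow]
  have : r ≠ 0 := ne_of_gt hrpos
  field_simp

/-- With h the piecewise-linear ramp on [0,π] and
F(z) = z|z|^{1-h(arg z)} on the upper half-plane, F restricted to ℝ equals f₀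
(f₀(x) = x for x ≤ 0, x² for x ≥ 0), and the pointwise distortion K(z,F) equals 1 for
arg(z) > π/2 + ε and equals 2 for arg(z) < π/2 - ε. -/
theorem stmt_14 (ε : ℝ) (hε0 : 0 < ε) (hεπ : ε < π / 2)
    (h : ℝ → ℝ)
    (hh : ∀ θ : ℝ, h θ =
      if θ < π / 2 - ε then 0
      else if θ ≤ π / 2 + ε then (θ - π / 2 + ε) / (2 * ε)
      else 1)
    (F : ℂ → ℂ)
    (hF : ∀ z : ℂ, F z =
      z * (((‖z‖ : ℝ) : ℂ) ^ ((1 - h (Complex.arg z) : ℝ) : ℂ))) :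
    (∀ x : ℝ, F (x : ℂ) = if x ≤ 0 then (x : ℂ) else ((x : ℂ) ^ 2)) ∧
    (∀ z : ℂ, 0 < z.im → π / 2 + ε < Complex.arg z → Kdist F z = 1) ∧
    (∀ z : ℂ, 0 < z.im → Complex.arg z < π / 2 - ε → Kdist F z = 2) := by
  have hπ : (0:ℝ) < π := Real.pi_pos
  refine ⟨?_, ?_, ?_⟩
  · intro x
    rcases lt_trichotomy x 0 with hx | hx | hx
    · rw [if_pos hx.le, hF]
      have harg : Complex.arg (x : ℂ) = π := Complex.arg_ofReal_of_neg hx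
      have hhv : h (Complex.arg (x : ℂ)) = 1 := by
        rw [harg, hh]
        rw [if_neg (by linarith), if_neg (by linarith)]
      rw [hhv]
      norm_num
    · subst hx; rw [hF]; simp
    · rw [if_neg (by linarith), hF]
      have harg : Complex.arg (x : ℂ) = 0 := Complex.arg_ofReal_of_nonneg hx.le
      have hhv : h (Complex.arg (x : ℂ)) = 0 := by
        rw [harg, hh, if_pos (by linarith)]
      rw [hhv]
      norm_num
      rw [abs_of_pos hx]
      ring
  · intro z him harg
    have hslit : z ∈ Complex.slitPlane := Or.inr (ne_of_gt him)
    have hev : ∀ᶠ w in nhds z, π / 2 + ε < Complex.arg w :=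
      (continuousAt_const (y := π / 2 + ε)).eventually_lt (Complex.continuousAt_arg hslit) harg
    have heq : F =ᶠ[nhds z] id := by
      filter_upwards [hev] with w hw
      have hhv : h (Complex.arg w) = 1 := by
        rw [hh, if_neg (by linarith), if_neg (by linarith)]
      rw [hF, hhv]
      norm_num
    rw [Kdist, heq.fderiv_eq, fderiv_id]
    simp
  · intro z him harg
    have hz : z ≠ 0 := by
      intro hz0; rw [hz0] at him; simp at him
    have hslit : z ∈ Complex.slitPlane := Or.inr (ne_of_gt him)
    have hev : ∀ᶠ w in nhds z, Complex.arg w < π / 2 - ε :=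
      (Complex.continuousAt_arg hslit).eventually_lt (continuousAt_const (y := π / 2 - ε)) harg
    have heq : F =ᶠ[nhds z] (fun w : ℂ => ‖w‖ • w) := by
      filter_upwards [hev] with w hw
      have hhv : h (Complex.arg w) = 0 := by rw [hh, if_pos hw]
      rw [hF, hhv]
      norm_num
      ring
    rw [Kdist, heq.fderiv_eq]
    exact Kdist_G z hz
end
end
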